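/- If a finite connected graph G satisfies QEC(G) < -1/2, then G is claw-free, diamond-free, C_4-free and C_5-free: G contains no induced subgraph isomorphic to K_{1,3}, K_4 \ {e}, C_4, or C_5. -/
import Mathlib


/-- The quadratic embedding constant of a finite graph. -/
noncomputable def QEC {V : Type*} [Fintype V] (G : SimpleGraph V) : ℝ :=
  sSup {x : ℝ | ∃ f : V → ℝ,
    (∑ i, f i ^ 2) = 1 ∧ (∑ i, f i) = 0 ∧
    x = ∑ i, ∑ j, (G.dist i j : ℝ) * f i * f j}

/-- The claw K_{1,3}. -/
def claw : SimpleGraph (Fin 4) := SimpleGraph.fromRel (fun i _ => i = 0)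

/-- The diamond K_4 \ {e}: K_4 minus the edge {2,3}. -/
def diamond : SimpleGraph (Fin 4) :=
  SimpleGraph.fromRel (fun i j => ({i, j} : Finset (Fin 4)) ≠ {2, 3})

/-- The 4-cycle. -/
def cycleFour : SimpleGraph (Fin 4) := SimpleGraph.fromRel (fun i j => j = i + 1)

/-- The 5-cycle. -/
def cycleFive : SimpleGraph (Fin 5) := SimpleGraph.fromRel (fun i j => j = i + 1)

instance : DecidableRel claw.Adj := fun i j =>
  decidable_of_iff _ (SimpleGraph.fromRel_adj _ i j).symm

instance : DecidableRel diamond.Adj := fun i j =>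
  decidable_of_iff _ (SimpleGraph.fromRel_adj _ i j).symm

instance : DecidableRel cycleFour.Adj := fun i j =>
  decidable_of_iff _ (SimpleGraph.fromRel_adj _ i j).symm

instance : DecidableRel cycleFive.Adj := fun i j =>
  decidable_of_iff _ (SimpleGraph.fromRel_adj _ i j).symm

lemma sum_supported {V : Type*} [Fintype V] {n : ℕ} (φ : Fin n ↪ V) (h : V → ℝ)
    (h0 : ∀ v, (∀ i, φ i ≠ v) → h v = 0) : ∑ v, h v = ∑ i, h (φ i) := by
  classical
  rw [← Finset.sum_map Finset.univ φ h]
  symm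
  apply Finset.sum_subset (Finset.subset_univ _)
  intro v _ hv
  exact h0 v fun i hi => hv (Finset.mem_map.2 ⟨i, Finset.mem_univ i, hi⟩)

lemma dist_eq_two' {V : Type*} (G : SimpleGraph V) {u v w : V} (hne : u ≠ v)
    (huv : ¬ G.Adj u v) (h1 : G.Adj u w) (h2 : G.Adj w v) : G.dist u v = 2 := by
  have hle : G.dist u v ≤ 2 := by
    simpa using SimpleGraph.dist_le
      (SimpleGraph.Walk.cons h1 (SimpleGraph.Walk.cons h2 SimpleGraph.Walk.nil))
  have hr : G.Reachable u v :=
    ⟨SimpleGraph.Walk.cons h1 (SimpleGraph.Walk.cons h2 SimpleGraph.Walk.nil)⟩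
  have hpos : 0 < G.dist u v := hr.pos_dist_of_ne hne
  have h1' : G.dist u v ≠ 1 := fun hh => huv (SimpleGraph.dist_eq_one_iff_adj.1 hh)
  omega

lemma dist_of_embed {V : Type*} (G : SimpleGraph V) {n : ℕ} (H : SimpleGraph (Fin n))
    [DecidableRel H.Adj] [DecidableEq (Fin n)]
    (φ : Fin n ↪ V) (hφ : ∀ i j, G.Adj (φ i) (φ j) ↔ H.Adj i j)
    (hcom : ∀ i j, i ≠ j → ¬ H.Adj i j → ∃ k, H.Adj i k ∧ H.Adj k j) :
    ∀ i j, G.dist (φ i) (φ j) = if i = j then 0 else if H.Adj i j then 1 else 2 := by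
  intro i j
  by_cases hij : i = j
  · simp [hij]
  · by_cases hadj : H.Adj i j
    · simp [hij, hadj, SimpleGraph.dist_eq_one_iff_adj.2 ((hφ i j).2 hadj)]
    · obtain ⟨k, hk1, hk2⟩ := hcom i j hij hadj
      simp only [hij, hadj, if_false]
      exact dist_eq_two' G (φ.injective.ne hij) (fun hc => hadj ((hφ i j).1 hc))
        ((hφ i k).2 hk1) ((hφ k j).2 hk2)

open Classical in
lemma qec_ge_aux {V : Type*} [Fintype V] (G : SimpleGraph V) {n : ℕ} (φ : Fin n ↪ V)
    (g : Fin n → ℝ) (hsq : ∑ i, g i ^ 2 = 1) (hsum : ∑ i, g i = 0)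
    (hval : (-1/2 : ℝ) ≤ ∑ i, ∑ j, (G.dist (φ i) (φ j) : ℝ) * g i * g j) :
    ¬ (QEC G < -1/2) := by
  intro h
  let f : V → ℝ := fun v => if hv : ∃ i, φ i = v then g hv.choose else 0
  have hfφ : ∀ i, f (φ i) = g i := by
    intro i
    have hv : ∃ k, φ k = φ i := ⟨i, rfl⟩
    have := hv.choose_spec
    simp only [f, dif_pos hv]
    congr 1
    exact φ.injective this
  have hf0 : ∀ v, (∀ i, φ i ≠ v) → f v = 0 := by
    intro v hv
    have hne : ¬ ∃ i, φ i = v := by push_neg; exact hv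
    simp only [f, dif_neg hne]
  have hx : (∑ i, ∑ j, (G.dist (φ i) (φ j) : ℝ) * g i * g j) ∈ {x : ℝ | ∃ f : V → ℝ,
      (∑ i, f i ^ 2) = 1 ∧ (∑ i, f i) = 0 ∧
      x = ∑ i, ∑ j, (G.dist i j : ℝ) * f i * f j} := by
    refine ⟨f, ?_, ?_, ?_⟩
    · rw [sum_supported φ (fun v => f v ^ 2) (fun v hv => by simp [hf0 v hv])]
      simp [hfφ, hsq]
    · rw [sum_supported φ f hf0]; simp [hfφ, hsum]
    · rw [sum_supported φ (fun v => ∑ w, (G.dist v w : ℝ) * f v * f w)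
        (fun v hv => by simp [hf0 v hv])]
      refine (Finset.sum_congr rfl fun i _ => ?_).symm
      rw [sum_supported φ (fun w => (G.dist (φ i) w : ℝ) * f (φ i) * f w)
        (fun w hw => by simp [hf0 w hw])]
      simp [hfφ]
  by_cases hb : BddAbove {x : ℝ | ∃ f : V → ℝ,
      (∑ i, f i ^ 2) = 1 ∧ (∑ i, f i) = 0 ∧
      x = ∑ i, ∑ j, (G.dist i j : ℝ) * f i * f j}
  · have hle : (∑ i, ∑ j, (G.dist (φ i) (φ j) : ℝ) * g i * g j) ≤ QEC G := by
      unfold QEC; exact le_csSup hb hx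
    linarith
  · have hz : QEC G = 0 := by
      unfold QEC; exact Real.sSup_of_not_bddAbove hb
    rw [hz] at h; linarith

/-- a finite connected graph with QEC(G) < -1/2 is claw-free,
diamond-free, C_4-free and C_5-free (as induced subgraphs). -/
theorem forbidden_subgraphs_of_qec_lt_neg_half {V : Type*} [Fintype V]
    (G : SimpleGraph V) (hG : G.Connected) (h : QEC G < -1/2) :
    (¬∃ φ : Fin 4 ↪ V, ∀ i j, G.Adj (φ i) (φ j) ↔ claw.Adj i j) ∧
    (¬∃ φ : Fin 4 ↪ V, ∀ i j, G.Adj (φ i) (φ j) ↔ diamond.Adj i j) ∧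
    (¬∃ φ : Fin 4 ↪ V, ∀ i j, G.Adj (φ i) (φ j) ↔ cycleFour.Adj i j) ∧
    (¬∃ φ : Fin 5 ↪ V, ∀ i j, G.Adj (φ i) (φ j) ↔ cycleFive.Adj i j) := by
  refine ⟨?_, ?_, ?_, ?_⟩ <;> rintro ⟨φ, hφ⟩
  · -- claw
    have hcom : ∀ i j : Fin 4, i ≠ j → ¬ claw.Adj i j →
        ∃ k, claw.Adj i k ∧ claw.Adj k j := by decide
    have hD := dist_of_embed G claw φ hφ hcom
    set s : ℝ := Real.sqrt 12 with hsdef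
    have hs : s ^ 2 = 12 := Real.sq_sqrt (by norm_num)
    have hs0 : s ≠ 0 := ne_of_gt (Real.sqrt_pos.2 (by norm_num))
    refine qec_ge_aux G φ ![-3/s, 1/s, 1/s, 1/s] ?_ ?_ ?_ h
    · simp [Fin.sum_univ_four]
      field_simp
      linarith [hs]
    · simp [Fin.sum_univ_four]
      ring
    · simp only [Fin.sum_univ_four, hD]
      simp +decide
      have h12 : s⁻¹ ^ 2 = (12:ℝ)⁻¹ := by rw [inv_pow, hs]
      simp only [div_eq_mul_inv]
      nlinarith [h12]
  · -- diamond
    have hcom : ∀ i j : Fin 4, i ≠ j → ¬ diamond.Adj i j →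
        ∃ k, diamond.Adj i k ∧ diamond.Adj k j := by decide
    have hD := dist_of_embed G diamond φ hφ hcom
    refine qec_ge_aux G φ ![-1/2, -1/2, 1/2, 1/2] ?_ ?_ ?_ h
    · simp [Fin.sum_univ_four]; norm_num
    · simp [Fin.sum_univ_four]; norm_num
    · simp only [Fin.sum_univ_four, hD]
      simp +decide
      norm_num
  · -- C4
    have hcom : ∀ i j : Fin 4, i ≠ j → ¬ cycleFour.Adj i j →
        ∃ k, cycleFour.Adj i k ∧ cycleFour.Adj k j := by decide
    have hD := dist_of_embed G cycleFour φ hφ hcom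
    refine qec_ge_aux G φ ![1/2, -1/2, 1/2, -1/2] ?_ ?_ ?_ h
    · simp [Fin.sum_univ_four]; norm_num
    · simp [Fin.sum_univ_four]; norm_num
    · simp only [Fin.sum_univ_four, hD]
      simp +decide
      norm_num
  · -- C5
    have hcom : ∀ i j : Fin 5, i ≠ j → ¬ cycleFive.Adj i j →
        ∃ k, cycleFive.Adj i k ∧ cycleFive.Adj k j := by decide
    have hD := dist_of_embed G cycleFive φ hφ hcom
    set s : ℝ := Real.sqrt 246 with hsdef
    have hs : s ^ 2 = 246 := Real.sq_sqrt (by norm_num)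
    have hs0 : s ≠ 0 := ne_of_gt (Real.sqrt_pos.2 (by norm_num))
    refine qec_ge_aux G φ ![10/s, -8/s, 3/s, 3/s, -8/s] ?_ ?_ ?_ h
    · simp [Fin.sum_univ_five]
      field_simp
      nlinarith [hs]
    · simp [Fin.sum_univ_five]
      ring
    · simp only [Fin.sum_univ_five, hD]
      have h246 : s⁻¹ ^ 2 = (246:ℝ)⁻¹ := by rw [inv_pow, hs]
      simp +decide
      simp only [div_eq_mul_inv]
      nlinarith [h246]
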